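/- Let n ≥ 1, let γ, μ ∈ ℝⁿ have all entries strictly positive, let q ∈ ℝⁿ have all entries nonnegative, and let η be a permutation of {1,…,n} such that x_l := q_{η(l)}/γ_{η(l)} satisfies x₁ ≥ x₂ ≥ … ≥ xₙ. Let f ∈ ℝⁿ have nonnegative entries, let Λ ≥ 0, and suppose ε′ > 0 satisfies Σ_{l=1}^k μ_{η(l)} − Λ·Σ_{l=1}^k f_l ≥ ε′ for every k ∈ {1,…,n}. Then for every m ∈ {0,1,…,n−1}: (Λ f₁ − μ_{η(1)})·x₁ + Σ_{l=2}^{m+1} (Λ f_l − μ_{η(l)})·x_l ≤ −(ε′/Σ_r γ_r)·Σ_r q_r ≤ −(ε′/Σ_r γ_r)·‖q‖₂, where ‖q‖₂ is the Euclidean norm of q. -/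
import Mathlib


open Finset

/-- deterministic negative-drift inequality in the proof of Theorem 4.1.
With sorted scaled queue lengths `x_l = q_{η(l)}/γ_{η(l)}` and a uniform gap `ε′` between
partial service and arrival rates, for every `m ∈ {0,…,n−1}` the weighted drift term
`(Λ f₁ − μ_{η(1)}) x₁ + Σ_{l=2}^{m+1} (Λ f_l − μ_{η(l)}) x_l` is at most
`−(ε′/Σ γ)·Σ q ≤ −(ε′/Σ γ)·‖q‖₂`. -/
theorem stability_negative_drift
    (n : ℕ) (hn : 1 ≤ n) (γ μ q : Fin n → ℝ)
    (hγ : ∀ l, 0 < γ l) (hμ : ∀ l, 0 < μ l) (hq : ∀ l, 0 ≤ q l)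
    (η : Equiv.Perm (Fin n))
    (hsort : ∀ i j : Fin n, i ≤ j → q (η j) / γ (η j) ≤ q (η i) / γ (η i))
    (f : Fin n → ℝ) (hf : ∀ l, 0 ≤ f l)
    (Λ : ℝ) (hΛ : 0 ≤ Λ)
    (ε' : ℝ) (hε' : 0 < ε')
    (hgap : ∀ k : Fin n,
      ε' ≤ ∑ l ∈ Finset.univ.filter (· ≤ k), μ (η l)
            - Λ * ∑ l ∈ Finset.univ.filter (· ≤ k), f l) :
    ∀ m : ℕ, m ≤ n - 1 →
      ((Λ * f ⟨0, by omega⟩ - μ (η ⟨0, by omega⟩)) *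
          (q (η ⟨0, by omega⟩) / γ (η ⟨0, by omega⟩))
        + ∑ l ∈ Finset.univ.filter (fun l : Fin n => 1 ≤ (l : ℕ) ∧ (l : ℕ) ≤ m),
            (Λ * f l - μ (η l)) * (q (η l) / γ (η l))
        ≤ -(ε' / ∑ r, γ r) * ∑ r, q r) ∧
      -(ε' / ∑ r, γ r) * ∑ r, q r ≤ -(ε' / ∑ r, γ r) * Real.sqrt (∑ r, (q r) ^ 2) := by
  intro m hm
  have h0n : 0 < n := hn
  have hmn : m < n := by omega
  set A : Fin n → ℝ := fun l => Λ * f l - μ (η l) with hA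
  set X : Fin n → ℝ := fun l => q (η l) / γ (η l) with hXdef
  have hX0 : ∀ l, 0 ≤ X l := fun l => div_nonneg (hq _) (hγ _).le
  -- partial sums bound
  have hS : ∀ k : ℕ, (hk : k < n) →
      (∑ l ∈ univ.filter (fun l : Fin n => (l:ℕ) ≤ k), A l) ≤ -ε' := by
    intro k hk
    have hg := hgap ⟨k, hk⟩
    have hfe : univ.filter (fun l : Fin n => l ≤ (⟨k,hk⟩ : Fin n)) =
        univ.filter (fun l : Fin n => (l:ℕ) ≤ k) := by
      ext l; simp [Fin.le_def]
    rw [hfe] at hg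
    have : (∑ l ∈ univ.filter (fun l : Fin n => (l:ℕ) ≤ k), A l)
        = Λ * (∑ l ∈ univ.filter (fun l : Fin n => (l:ℕ) ≤ k), f l)
          - ∑ l ∈ univ.filter (fun l : Fin n => (l:ℕ) ≤ k), μ (η l) := by
      rw [Finset.mul_sum, ← Finset.sum_sub_distrib]
    rw [this]; linarith
  -- Abel-type induction
  have key : ∀ k : ℕ, (hk : k < n) →
      (∑ l ∈ univ.filter (fun l : Fin n => (l:ℕ) ≤ k), A l * X l)
        ≤ (∑ l ∈ univ.filter (fun l : Fin n => (l:ℕ) ≤ k), A l) * X ⟨k,hk⟩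
          - ε' * (X ⟨0, h0n⟩ - X ⟨k,hk⟩) := by
    intro k
    induction k with
    | zero =>
      intro hk
      have hset : univ.filter (fun l : Fin n => (l:ℕ) ≤ 0) = {(⟨0,hk⟩ : Fin n)} := by
        ext l
        simp [Fin.ext_iff]
      rw [hset]
      simp
    | succ k ih =>
      intro hk
      have hk' : k < n := by omega
      have hins : univ.filter (fun l : Fin n => (l:ℕ) ≤ k+1) =
          insert (⟨k+1,hk⟩ : Fin n) (univ.filter (fun l : Fin n => (l:ℕ) ≤ k)) := by
        ext l
        simp only [mem_filter, mem_univ, true_and, mem_insert, Fin.ext_iff]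
        omega
      have hnotmem : (⟨k+1,hk⟩ : Fin n) ∉ univ.filter (fun l : Fin n => (l:ℕ) ≤ k) := by
        simp
      rw [hins, Finset.sum_insert hnotmem, Finset.sum_insert hnotmem]
      have h1 := ih hk'
      have hSk := hS k hk'
      have hXle : X ⟨k+1,hk⟩ ≤ X ⟨k,hk'⟩ := hsort _ _ (by simp [Fin.le_def])
      have hmul : (∑ l ∈ univ.filter (fun l : Fin n => (l:ℕ) ≤ k), A l) *
          (X ⟨k,hk'⟩ - X ⟨k+1,hk⟩) ≤ -ε' * (X ⟨k,hk'⟩ - X ⟨k+1,hk⟩) :=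
        mul_le_mul_of_nonneg_right hSk (by linarith)
      nlinarith
  -- T m ≤ -ε' * X 0
  have hT : (∑ l ∈ univ.filter (fun l : Fin n => (l:ℕ) ≤ m), A l * X l)
      ≤ -ε' * X ⟨0, h0n⟩ := by
    have h1 := key m hmn
    have h2 := hS m hmn
    have h3 : (∑ l ∈ univ.filter (fun l : Fin n => (l:ℕ) ≤ m), A l) * X ⟨m,hmn⟩
        ≤ -ε' * X ⟨m,hmn⟩ := mul_le_mul_of_nonneg_right h2 (hX0 _)
    nlinarith [hX0 (⟨m,hmn⟩ : Fin n)]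
  -- rewrite LHS as T m
  have hsplit : (Λ * f ⟨0, h0n⟩ - μ (η ⟨0, h0n⟩)) * (q (η ⟨0, h0n⟩) / γ (η ⟨0, h0n⟩))
      + ∑ l ∈ univ.filter (fun l : Fin n => 1 ≤ (l : ℕ) ∧ (l : ℕ) ≤ m),
          (Λ * f l - μ (η l)) * (q (η l) / γ (η l))
      = ∑ l ∈ univ.filter (fun l : Fin n => (l:ℕ) ≤ m), A l * X l := by
    have herase : univ.filter (fun l : Fin n => 1 ≤ (l : ℕ) ∧ (l : ℕ) ≤ m)
        = (univ.filter (fun l : Fin n => (l:ℕ) ≤ m)).erase ⟨0, h0n⟩ := by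
      ext l
      simp only [mem_filter, mem_univ, true_and, mem_erase, ne_eq, Fin.ext_iff,
        show ((⟨0, h0n⟩ : Fin n) : ℕ) = 0 from rfl]
      omega
    have hmem : (⟨0, h0n⟩ : Fin n) ∈ univ.filter (fun l : Fin n => (l:ℕ) ≤ m) := by
      simp
    rw [herase]
    exact Finset.add_sum_erase _ (fun l => A l * X l) hmem
  -- q bound: ∑ q ≤ X0 * ∑ γ
  have hγsum : 0 < ∑ r, γ r :=
    Finset.sum_pos (fun i _ => hγ i) (univ_nonempty_iff.mpr ⟨⟨0,h0n⟩⟩)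
  have hqsum : ∑ r, q r ≤ X ⟨0, h0n⟩ * ∑ r, γ r := by
    rw [Finset.mul_sum]
    apply Finset.sum_le_sum
    intro r _
    have hXr : X (η.symm r) ≤ X ⟨0, h0n⟩ := hsort _ _ (by simp [Fin.le_def])
    have : q r / γ r ≤ X ⟨0, h0n⟩ := by
      have : X (η.symm r) = q r / γ r := by simp [hXdef]
      linarith
    calc q r = (q r / γ r) * γ r := (div_mul_cancel₀ (q r) (hγ r).ne').symm
    _ ≤ X ⟨0, h0n⟩ * γ r := mul_le_mul_of_nonneg_right this (hγ r).le
  constructor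
  · rw [hsplit]
    have hfinal : -(ε' / ∑ r, γ r) * ∑ r, q r = -(ε' * ((∑ r, q r) / (∑ r, γ r))) := by
      ring
    have h5 : (∑ r, q r) / (∑ r, γ r) ≤ X ⟨0, h0n⟩ :=
      (div_le_iff₀ hγsum).mpr hqsum
    have h6 : -ε' * X ⟨0, h0n⟩ ≤ -(ε' / ∑ r, γ r) * ∑ r, q r := by
      rw [hfinal]
      nlinarith
    linarith
  · have hqn : 0 ≤ ∑ r, q r := Finset.sum_nonneg (fun i _ => hq i)
    have hsq : ∑ r, (q r)^2 ≤ (∑ r, q r)^2 := by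
      exact Finset.sum_sq_le_sq_sum_of_nonneg (fun i _ => hq i)
    have h7 : Real.sqrt (∑ r, (q r)^2) ≤ ∑ r, q r := by
      calc Real.sqrt (∑ r, (q r)^2) ≤ Real.sqrt ((∑ r, q r)^2) := Real.sqrt_le_sqrt hsq
      _ = ∑ r, q r := Real.sqrt_sq hqn
    have hc : 0 ≤ ε' / ∑ r, γ r := div_nonneg hε'.le hγsum.le
    nlinarith
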